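/- arXiv:2512.04531 — 4 statements merged into one kernel-verified Lean document; each statement's English description precedes it below -/
import Mathlib

section
/- Let G, H be countable groups, G ↷ (X,μ) a pmp action, c : G × X → H a cocycle, and let {G_k}_{k≥1} be an increasing sequence of subgroups of G with G = ⋃_k G_k. Then c is amenable if and only if the restriction c|(G_k × X) is amenable for every k ≥ 1. -/
open MeasureTheory Filter Topology

/-- `ℓ¹` probability vectors on `H` (the space `P(H)`). -/
def IsProbVec {H : Type*} (p : H → ℝ) : Prop :=
  (∀ h, 0 ≤ p h) ∧ ∑' h, p h = 1

/-- The `ℓ¹` distance between two vectors. -/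
noncomputable def l1dist {H : Type*} (p q : H → ℝ) : ℝ := ∑' h, |p h - q h|

/-- The left translation action of `H` on `ℓ¹(H)`. -/
def lshift {H : Type*} [Group H] (h : H) (p : H → ℝ) : H → ℝ := fun k => p (h⁻¹ * k)

/-- A cocycle `c` for an action `σ` of `Γ` on `(X, μ)`, with values in a countable group `H`,
is *amenable* if there are Borel maps `φₙ : X → P(H)` with
`‖φₙ(gx) − c(g,x)·φₙ(x)‖₁ → 0` for every `g ∈ Γ` and a.e. `x ∈ X`. -/
def AmenableCocycle {Γ H X : Type*} [Group H] [MeasurableSpace X]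
    (μ : Measure X) (σ : Γ → X → X) (c : Γ → X → H) : Prop :=
  ∃ φ : ℕ → X → H → ℝ,
    (∀ n h, Measurable fun x => φ n x h) ∧
    (∀ n x, IsProbVec (φ n x)) ∧
    ∀ g : Γ, ∀ᵐ x ∂μ,
      Tendsto (fun n => l1dist (φ n (σ g x)) (lshift (c g x) (φ n x))) atTop (𝓝 0)

/-- A cocycle `c` for an action `σ` of `Γ` on `(X, μ)` is *essentially trivial* if there is a
Borel map `φ : X → F(H)` into finite nonempty subsets of `H` with `φ(gx) = c(g,x)·φ(x)`
for every `g ∈ Γ` and a.e. `x ∈ X`. -/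
def EssTrivialCocycle {Γ H X : Type*} [Group H] [MeasurableSpace X]
    (μ : Measure X) (σ : Γ → X → X) (c : Γ → X → H) : Prop :=
  ∃ φ : X → Finset H,
    (∀ F : Finset H, MeasurableSet {x | φ x = F}) ∧
    (∀ x, (φ x).Nonempty) ∧
    ∀ g : Γ, ∀ᵐ x ∂μ, (φ (σ g x) : Set H) = (fun h => c g x * h) '' (φ x : Set H)

/-!
Only the converse needs work. Enumerate the countable group `G = {g₀, g₁, …}` and let `Φ_{k,m}`
witness amenability on `G_k`. For each `n` choose `k n` with `g₀, …, gₙ ∈ G_{k n}`, and then,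
since a.e. convergence implies convergence in measure for a finite measure, a time `m n` at which
the defect `‖Φ(gⱼx) − c(gⱼ,x)·Φ(x)‖₁` exceeds `1/(n+1)` only on a set of measure `< 2⁻ⁿ`, for
every `j ≤ n`. By Borel–Cantelli the defects of the diagonal sequence `Φ_{k n, m n}` tend to `0`
almost everywhere.
-/

open scoped ENNReal

theorem Measurable.l1dist {X H : Type*} [MeasurableSpace X] [Countable H] {p q : X → H → ℝ}
    (hp : ∀ h, Measurable fun x => p x h) (hq : ∀ h, Measurable fun x => q x h) :
    Measurable fun x => _root_.l1dist (p x) (q x) :=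
  Measurable.tsum fun h => ((hp h).sub (hq h)).abs

theorem measurable_lshift_apply {X H : Type*} [MeasurableSpace X] [Group H] [Countable H]
    [MeasurableSpace H] [MeasurableSingletonClass H] {c : X → H} {p : X → H → ℝ}
    (hc : Measurable c) (hp : ∀ h, Measurable fun x => p x h) (h : H) :
    Measurable fun x => lshift (c x) (p x) h :=
  (measurable_from_prod_countable_left (f := fun y : X × H => p y.1 y.2) hp).comp
    (measurable_id.prodMk ((measurable_of_countable fun y : H => y⁻¹ * h).comp hc))

theorem ae_tendsto_of_tsum_measure_le_dist_ne_top {α E : Type*} [MeasurableSpace α]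
    {μ : Measure α} [PseudoMetricSpace E] {f : ℕ → α → E} {g : α → E} {ε : ℕ → ℝ}
    (hε : Tendsto ε atTop (𝓝 0)) (hsum : ∑' n, μ {x | ε n ≤ dist (f n x) (g x)} ≠ ∞) :
    ∀ᵐ x ∂μ, Tendsto (fun n => f n x) atTop (𝓝 (g x)) := by
  filter_upwards [ae_eventually_notMem hsum] with x hx
  refine tendsto_iff_dist_tendsto_zero.2 (squeeze_zero' (.of_forall fun n => dist_nonneg) ?_ hε)
  filter_upwards [hx] with n hn
  exact (not_le.1 hn).le

theorem exists_diagonal_tendsto_ae {α ι E : Type*} [MeasurableSpace α] {μ : Measure α}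
    [IsFiniteMeasure μ] [Countable ι] [PseudoMetricSpace E] {f : ℕ → ℕ → ι → α → E}
    {g : ι → α → E} (hf_meas : ∀ k m i, AEStronglyMeasurable (f k m i) μ)
    (hf : ∀ i, ∀ᶠ k in atTop, ∀ᵐ x ∂μ, Tendsto (fun m => f k m i x) atTop (𝓝 (g i x))) :
    ∃ k m : ℕ → ℕ, ∀ i, ∀ᵐ x ∂μ, Tendsto (fun n => f (k n) (m n) i x) atTop (𝓝 (g i x)) := by
  rcases isEmpty_or_nonempty ι with hι | hι
  · exact ⟨0, 0, fun i => isEmptyElim i⟩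
  obtain ⟨e, he⟩ := exists_surjective_nat ι
  have hk : ∀ n, ∃ k, ∀ j ∈ Set.Iic n,
      ∀ᵐ x ∂μ, Tendsto (fun m => f k m (e j) x) atTop (𝓝 (g (e j) x)) := fun n =>
    ((Set.finite_Iic n).eventually_all.2 fun j _ => hf (e j)).exists
  choose k hk using hk
  have hm : ∀ n : ℕ, ∃ m, ∀ j ∈ Set.Iic n,
      μ {x | 1 / ((n : ℝ) + 1) ≤ dist (f (k n) m (e j) x) (g (e j) x)} < 2⁻¹ ^ n := fun n =>
    ((Set.finite_Iic n).eventually_all.2 fun j hj =>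
      (tendstoInMeasure_iff_dist.1
        (tendstoInMeasure_of_tendsto_ae (fun m => hf_meas _ m _) (hk n j hj)) _ (by positivity)
        ).eventually_lt_const (ENNReal.pow_pos (by norm_num) n)).exists
  choose m hm using hm
  refine ⟨k, m, fun i => ?_⟩
  obtain ⟨j, rfl⟩ := he i
  -- the `n`-th choice controls `e j` only from `n = j` on, hence the shift by `j`
  have hsum : ∑' n, μ {x | 1 / (((n + j : ℕ) : ℝ) + 1) ≤
      dist (f (k (n + j)) (m (n + j)) (e j) x) (g (e j) x)} ≠ ∞ := by
    refine ne_top_of_le_ne_top (by simp : ∑' n : ℕ, (2⁻¹ : ℝ≥0∞) ^ n ≠ ∞)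
      (ENNReal.tsum_le_tsum fun n => ?_)
    calc _ ≤ (2⁻¹ : ℝ≥0∞) ^ (n + j) := (hm (n + j) j (by simp)).le
      _ ≤ 2⁻¹ ^ n := pow_le_pow_right_of_le_one' (by norm_num) (by omega)
  have hε : Tendsto (fun n : ℕ => 1 / (((n + j : ℕ) : ℝ) + 1)) atTop (𝓝 0) :=
    (tendsto_add_atTop_iff_nat j).2 tendsto_one_div_add_atTop_nhds_zero_nat
  filter_upwards [ae_tendsto_of_tsum_measure_le_dist_ne_top hε hsum] with x hx
  exact (tendsto_add_atTop_iff_nat j).1 hx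

theorem amenableCocycle_iff_restrictions_general
    {G H X : Type*} [Group G] [Countable G] [Group H] [Countable H]
    [MeasurableSpace H] [MeasurableSingletonClass H]
    [MeasurableSpace X] (μ : Measure X) [IsProbabilityMeasure μ]
    [MulAction G X] (hsmul_meas : ∀ g : G, Measurable fun x : X => g • x)
    (c : G → X → H) (hc_meas : ∀ g : G, Measurable (c g))
    (Gk : ℕ → Subgroup G) (h_mono : Monotone Gk) (h_union : ⋃ k, (Gk k : Set G) = Set.univ) :
    AmenableCocycle μ (fun (g : G) (x : X) => g • x) c ↔
      ∀ k : ℕ, AmenableCocycle μ (fun (g : Gk k) (x : X) => (g : G) • x)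
        (fun (g : Gk k) x => c (g : G) x) := by
  refine ⟨fun ⟨φ, hφm, hφp, hφt⟩ k => ⟨φ, hφm, hφp, fun g => hφt g⟩, fun hres => ?_⟩
  choose Φ hΦm hΦp hΦt using hres
  have hmeas : ∀ k m g, Measurable fun x => l1dist (Φ k m (g • x)) (lshift (c g x) (Φ k m x)) :=
    fun k m g => Measurable.l1dist (fun h => (hΦm k m h).comp (hsmul_meas g))
      (measurable_lshift_apply (hc_meas g) (hΦm k m))
  have heventually : ∀ g : G, ∀ᶠ k in atTop, ∀ᵐ x ∂μ, Tendsto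
      (fun m => l1dist (Φ k m (g • x)) (lshift (c g x) (Φ k m x))) atTop (𝓝 0) := fun g => by
    obtain ⟨k₀, hk₀⟩ := Set.mem_iUnion.1 (h_union.symm ▸ Set.mem_univ g)
    exact eventually_atTop.2 ⟨k₀, fun k hk => hΦt k ⟨g, h_mono hk hk₀⟩⟩
  obtain ⟨k, m, hkm⟩ :=
    exists_diagonal_tendsto_ae (fun k m g => (hmeas k m g).aestronglyMeasurable) heventually
  exact ⟨fun n => Φ (k n) (m n), fun n => hΦm (k n) (m n), fun n => hΦp (k n) (m n), hkm⟩

/-- For a pmp action `G ↷ (X,μ)`, a cocycle `c : G × X → H` and an increasing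
sequence of subgroups `G_k` with `G = ⋃_k G_k`, the cocycle `c` is amenable if and only if its
restriction to each `G_k × X` is amenable. -/
theorem amenableCocycle_iff_restrictions
    {G H X : Type*} [Group G] [Countable G] [Group H] [Countable H]
    [MeasurableSpace H] [MeasurableSingletonClass H]
    [MeasurableSpace X] (μ : Measure X) [IsProbabilityMeasure μ]
    [MulAction G X] (hsmul_meas : ∀ g : G, Measurable fun x : X => g • x)
    [SMulInvariantMeasure G X μ]
    (c : G → X → H) (hc_meas : ∀ g : G, Measurable (c g))
    (hc_cocycle : ∀ g₁ g₂ : G, ∀ᵐ x ∂μ, c (g₁ * g₂) x = c g₁ (g₂ • x) * c g₂ x)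
    (Gk : ℕ → Subgroup G) (h_mono : Monotone Gk) (h_union : ⋃ k, (Gk k : Set G) = Set.univ) :
    AmenableCocycle μ (fun (g : G) (x : X) => g • x) c ↔
      ∀ k : ℕ, AmenableCocycle μ (fun (g : Gk k) (x : X) => (g : G) • x)
        (fun (g : Gk k) x => c (g : G) x) :=
  amenableCocycle_iff_restrictions_general μ hsmul_meas c hc_meas Gk h_mono h_union
end

section
/- Let G, H be countable groups, G ↷ (X,μ) a pmp action, and c : G × X → H a cocycle. Suppose H = ⋃_{k≥1} H_k for an increasing sequence of subgroups H_k such that for each k there is a subgroup H_k' with H = H_k × H_k', and let p_k : H → H_k be the projection. If p_k ∘ c : G × X → H_k is an amenable cocycle for every k ≥ 1, then c is amenable. -/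
open MeasureTheory Filter Topology

/-!
Where `c(g,x) ∈ H_k` the projection `p_k` acts trivially, so the witnesses for `p_k ∘ c` are
witnesses for `c` there; as the `H_k` exhaust `H`, the remaining set has measure tending to `0`.
Since the `ℓ¹` defects are bounded by `2`, the mean defect of `c` for suitable witnesses of some
`p_k ∘ c` is therefore arbitrarily small, simultaneously for finitely many `g`. Choosing these
along an enumeration of `G` with summable bounds, Borel–Cantelli turns mean convergence into
almost everywhere convergence for every `g`.
-/

open scoped ENNReal
open Set

section

variable {H : Type*} {p q : H → ℝ}

lemma IsProbVec.summable (hp : IsProbVec p) : Summable p := by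
  by_contra hs
  exact zero_ne_one ((tsum_eq_zero_of_not_summable hs).symm.trans hp.2)

lemma IsProbVec.lshift [Group H] (hp : IsProbVec p) (h : H) : IsProbVec (lshift h p) :=
  ⟨fun _ => hp.1 _, ((Equiv.mulLeft h⁻¹).tsum_eq p).trans hp.2⟩

lemma IsProbVec.summable_abs_sub (hp : IsProbVec p) (hq : IsProbVec q) :
    Summable fun h => |p h - q h| :=
  (hp.summable.sub hq.summable).abs

lemma l1dist_nonneg (p q : H → ℝ) : 0 ≤ l1dist p q :=
  tsum_nonneg fun _ => abs_nonneg _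

lemma IsProbVec.l1dist_le_two (hp : IsProbVec p) (hq : IsProbVec q) : l1dist p q ≤ 2 :=
  calc l1dist p q ≤ ∑' h, (p h + q h) :=
        (hp.summable_abs_sub hq).tsum_le_tsum
          (fun h => abs_sub_le_iff.2 ⟨by linarith [hq.1 h], by linarith [hp.1 h]⟩)
          (hp.summable.add hq.summable)
    _ = 2 := by rw [hp.summable.tsum_add hq.summable, hp.2, hq.2]; norm_num

lemma Subgroup.eq_of_inv_mul_mem_of_disjoint [Group H] {K K' : Subgroup H} (hKK' : Disjoint K K')
    {a b : H} (ha : a ∈ K) (hb : b ∈ K) (hab : a⁻¹ * b ∈ K') : a = b :=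
  inv_mul_eq_one.1 <| Subgroup.disjoint_def.1 hKK' (mul_mem (inv_mem ha) hb) hab

end

section

variable {X : Type*} [MeasurableSpace X] {μ : Measure X}

lemma ae_tendsto_zero_of_tsum_lintegral_ne_top {f : ℕ → X → ℝ≥0∞}
    (hf : ∀ n, AEMeasurable (f n) μ) (h : ∑' n, ∫⁻ x, f n x ∂μ ≠ ∞) :
    ∀ᵐ x ∂μ, Tendsto (fun n => f n x) atTop (𝓝 0) :=
  (ae_lt_top' (AEMeasurable.tsum hf) (by rwa [lintegral_tsum hf])).mono
    fun _ hx => ENNReal.tendsto_atTop_zero_of_tsum_ne_top hx.ne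

theorem exists_seq_forall_ae_tendsto_zero {α ι : Type*} [Countable ι] [Nonempty ι]
    {F : α → ι → X → ℝ≥0∞} (hF : ∀ a i, AEMeasurable (F a i) μ)
    (hsmall : ∀ (S : Finset ι) (ε : ℝ≥0∞), 0 < ε → ∃ a, ∀ i ∈ S, ∫⁻ x, F a i x ∂μ < ε) :
    ∃ a : ℕ → α, ∀ i, ∀ᵐ x ∂μ, Tendsto (fun n => F (a n) i x) atTop (𝓝 0) := by
  classical
  obtain ⟨e, he⟩ := exists_surjective_nat ι
  choose a ha using fun m : ℕ =>
    hsmall ((Finset.range (m + 1)).image e) (2⁻¹ ^ m) (ENNReal.pow_pos (by simp) m)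
  refine ⟨a, fun i => ?_⟩
  obtain ⟨j, rfl⟩ := he i
  have hsum : ∑' m, ∫⁻ x, F (a (m + j)) (e j) x ∂μ ≠ ∞ := by
    refine ne_top_of_le_ne_top (ENNReal.tsum_geometric_two ▸ ENNReal.ofNat_ne_top)
      (ENNReal.tsum_le_tsum fun m => (ha (m + j) (e j) ?_).le.trans ?_)
    · exact Finset.mem_image_of_mem e (Finset.mem_range.2 (by omega))
    · exact pow_le_pow_of_le_one (by simp) (ENNReal.inv_le_one.2 one_le_two) (by omega)
  exact (ae_tendsto_zero_of_tsum_lintegral_ne_top (fun m => hF _ _) hsum).mono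
    fun _ hx => (tendsto_add_atTop_iff_nat j).1 hx

lemma tendsto_measure_preimage_compl_atTop [IsFiniteMeasure μ] {H : Type*} [MeasurableSpace H]
    {f : X → H} (hf : Measurable f) {S : ℕ → Set H} (hS_meas : ∀ k, MeasurableSet (S k))
    (hS_mono : Monotone S) (hS_univ : ⋃ k, S k = univ) :
    Tendsto (fun k => μ (f ⁻¹' (S k)ᶜ)) atTop (𝓝 0) := by
  have h := tendsto_measure_iInter_atTop (μ := μ)
    (fun k => (hf (hS_meas k).compl).nullMeasurableSet)
    (fun k l hkl => preimage_mono (compl_subset_compl.2 (hS_mono hkl))) ⟨0, measure_ne_top _ _⟩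
  rwa [← preimage_iInter, ← compl_iUnion, hS_univ, compl_univ, preimage_empty, measure_empty] at h

lemma tendsto_measure_setOf_ne_atTop [IsFiniteMeasure μ] {H : Type*} [MeasurableSpace H]
    {f : X → H} (hf : Measurable f) {S : ℕ → Set H} (hS_meas : ∀ k, MeasurableSet (S k))
    (hS_mono : Monotone S) (hS_univ : ⋃ k, S k = univ) {q : ℕ → H → H}
    (hq : ∀ k, ∀ h ∈ S k, q k h = h) :
    Tendsto (fun k => μ {x | f x ≠ q k (f x)}) atTop (𝓝 0) :=
  tendsto_of_tendsto_of_tendsto_of_le_of_le tendsto_const_nhds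
    (tendsto_measure_preimage_compl_atTop hf hS_meas hS_mono hS_univ) (fun _ => zero_le)
    fun k => measure_mono fun _ hx hmem => hx (hq k _ hmem).symm

end

section

variable {G H X : Type*} [Group H]
  {σ : G → X → X} {c c' : G → X → H} {φ : X → H → ℝ} {g : G}

noncomputable def invarianceDefect (σ : G → X → X) (c : G → X → H) (φ : X → H → ℝ) (g : G)
    (x : X) : ℝ≥0∞ :=
  ENNReal.ofReal (l1dist (φ (σ g x)) (lshift (c g x) (φ x)))

lemma invarianceDefect_le_two (hφ_prob : ∀ x, IsProbVec (φ x)) (x : X) :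
    invarianceDefect σ c φ g x ≤ 2 :=
  ENNReal.ofReal_le_of_le_toReal <| by
    simpa using (hφ_prob _).l1dist_le_two ((hφ_prob x).lshift _)

lemma measurable_invarianceDefect [MeasurableSpace X] [Countable H] [MeasurableSpace H]
    [MeasurableSingletonClass H]
    (hσ : Measurable (σ g)) (hc : Measurable (c g)) (hφ_meas : ∀ h, Measurable fun x => φ x h)
    (hφ_prob : ∀ x, IsProbVec (φ x)) : Measurable (invarianceDefect σ c φ g) := by
  have hφc : ∀ h, Measurable fun x => φ x ((c g x)⁻¹ * h) := fun h =>
    (measurable_from_prod_countable_left (f := fun y : X × H => φ y.1 y.2) hφ_meas).comp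
      (measurable_id.prodMk ((measurable_of_countable (· ⁻¹ * h)).comp hc))
  have heq : invarianceDefect σ c φ g =
      fun x => ∑' h, ENNReal.ofReal |φ (σ g x) h - φ x ((c g x)⁻¹ * h)| :=
    funext fun x => ENNReal.ofReal_tsum_of_nonneg (fun _ => abs_nonneg _)
      ((hφ_prob _).summable_abs_sub ((hφ_prob x).lshift _))
  rw [heq]
  exact Measurable.tsum fun h => (((hφ_meas h).comp hσ).sub (hφc h)).abs.ennreal_ofReal

lemma lintegral_invarianceDefect_le [MeasurableSpace X] (μ : Measure X)
    (hc' : Measurable (invarianceDefect σ c' φ g)) (hφ_prob : ∀ x, IsProbVec (φ x)) :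
    ∫⁻ x, invarianceDefect σ c φ g x ∂μ ≤
      ∫⁻ x, invarianceDefect σ c' φ g x ∂μ + 2 * μ {x | c g x ≠ c' g x} :=
  calc ∫⁻ x, invarianceDefect σ c φ g x ∂μ
      ≤ ∫⁻ x, (invarianceDefect σ c' φ g x +
          {x | c g x ≠ c' g x}.indicator (fun _ => 2) x) ∂μ := by
        refine lintegral_mono fun x => ?_
        by_cases hx : c g x = c' g x
        · simp [invarianceDefect, hx]
        · simpa [hx] using le_add_left (invarianceDefect_le_two hφ_prob x)
    _ ≤ ∫⁻ x, invarianceDefect σ c' φ g x ∂μ + 2 * μ {x | c g x ≠ c' g x} := by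
        rw [lintegral_add_left hc']
        gcongr
        exact lintegral_indicator_const_le _ _

lemma tendsto_lintegral_invarianceDefect [MeasurableSpace X] {μ : Measure X} [IsFiniteMeasure μ]
    {φ : ℕ → X → H → ℝ} (hmeas : ∀ n, Measurable (invarianceDefect σ c (φ n) g))
    (hφ_prob : ∀ n x, IsProbVec (φ n x))
    (hlim : ∀ᵐ x ∂μ,
      Tendsto (fun n => l1dist (φ n (σ g x)) (lshift (c g x) (φ n x))) atTop (𝓝 0)) :
    Tendsto (fun n => ∫⁻ x, invarianceDefect σ c (φ n) g x ∂μ) atTop (𝓝 0) := by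
  simpa using tendsto_lintegral_of_dominated_convergence (f := 0) (fun _ => 2) hmeas
    (fun n => ae_of_all _ (invarianceDefect_le_two (hφ_prob n)))
    (by simp [lintegral_const, ENNReal.mul_eq_top])
    (hlim.mono fun x hx => by simpa [invarianceDefect] using ENNReal.tendsto_ofReal hx)

theorem amenableCocycle_of_forall_finset_lintegral_lt [MeasurableSpace X] [Countable G]
    [Nonempty G] [Countable H] [MeasurableSpace H] [MeasurableSingletonClass H] {μ : Measure X}
    {α : Type*} {φ : α → X → H → ℝ} (hσ : ∀ g, Measurable (σ g)) (hc : ∀ g, Measurable (c g))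
    (hφ_meas : ∀ a h, Measurable fun x => φ a x h) (hφ_prob : ∀ a x, IsProbVec (φ a x))
    (hsmall : ∀ (S : Finset G) (ε : ℝ≥0∞), 0 < ε →
      ∃ a, ∀ g ∈ S, ∫⁻ x, invarianceDefect σ c (φ a) g x ∂μ < ε) :
    AmenableCocycle μ σ c := by
  obtain ⟨a, ha⟩ := exists_seq_forall_ae_tendsto_zero (fun a g =>
    (measurable_invarianceDefect (hσ g) (hc g) (hφ_meas a) (hφ_prob a)).aemeasurable) hsmall
  refine ⟨fun n => φ (a n), fun n => hφ_meas (a n), fun n => hφ_prob (a n), fun g => ?_⟩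
  filter_upwards [ha g] with x hx
  simpa [invarianceDefect, Function.comp_def, ENNReal.toReal_ofReal (l1dist_nonneg _ _)] using
    (ENNReal.tendsto_toReal ENNReal.zero_ne_top).comp hx

end

theorem amenableCocycle_of_projections_amenable_general
    {G H X : Type*} [Group G] [Countable G] [Group H] [Countable H]
    [MeasurableSpace H] [MeasurableSingletonClass H]
    [MeasurableSpace X] (μ : Measure X) [IsProbabilityMeasure μ]
    [MulAction G X] (hsmul_meas : ∀ g : G, Measurable fun x : X => g • x)
    (c : G → X → H) (hc_meas : ∀ g : G, Measurable (c g))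
    (Hk Hk' : ℕ → Subgroup H) (p : ℕ → H →* H)
    (h_mono : Monotone Hk) (h_union : ⋃ k, (Hk k : Set H) = Set.univ)
    -- `H = H_k × H_k'` as an internal direct product:
    (h_compl : ∀ k, (Hk k).IsComplement' (Hk' k))
    -- `p k` is the corresponding projection onto `H_k`:
    (hp_mem : ∀ k (h : H), p k h ∈ Hk k)
    (hp_proj : ∀ k (h : H), (p k h)⁻¹ * h ∈ Hk' k)
    (h_amen : ∀ k, AmenableCocycle μ (fun (g : G) (x : X) => g • x)
        (fun g x => p k (c g x))) :
    AmenableCocycle μ (fun (g : G) (x : X) => g • x) c := by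
  choose φ hφ_meas hφ_prob hφ_lim using h_amen
  have hp_fix : ∀ k, ∀ h ∈ Hk k, p k h = h := fun k h hh =>
    Subgroup.eq_of_inv_mul_mem_of_disjoint (h_compl k).disjoint (hp_mem k h) hh (hp_proj k h)
  have hdisagree : ∀ g, Tendsto (fun k => 2 * μ {x | c g x ≠ p k (c g x)}) atTop (𝓝 0) :=
    fun g => by simpa using ENNReal.Tendsto.const_mul (tendsto_measure_setOf_ne_atTop (hc_meas g)
      (fun k => (Hk k : Set H).to_countable.measurableSet) (SetLike.coe_mono.comp h_mono) h_union
      (fun k => hp_fix k)) (Or.inr ENNReal.ofNat_ne_top)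
  have hdefect_meas : ∀ k n g, Measurable
      (invarianceDefect (fun (g : G) (x : X) => g • x) (fun g x => p k (c g x)) (φ k n) g) :=
    fun k n g => measurable_invarianceDefect (hsmul_meas g)
      ((measurable_of_countable _).comp (hc_meas g)) (hφ_meas k n) (hφ_prob k n)
  refine amenableCocycle_of_forall_finset_lintegral_lt (φ := fun a : ℕ × ℕ => φ a.1 a.2)
    hsmul_meas hc_meas (fun a => hφ_meas a.1 a.2) (fun a => hφ_prob a.1 a.2) fun S ε hε => ?_
  have hε2 : 0 < ε / 2 := ENNReal.half_pos hε.ne'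
  obtain ⟨k, hk⟩ := ((eventually_all_finset S).2 fun g _ =>
    (hdisagree g).eventually_lt_const hε2).exists
  obtain ⟨n, hn⟩ := ((eventually_all_finset S).2 fun g _ =>
    (tendsto_lintegral_invarianceDefect (hdefect_meas k · g) (hφ_prob k)
      (hφ_lim k g)).eventually_lt_const hε2).exists
  refine ⟨(k, n), fun g hg => ?_⟩
  calc _ ≤ _ + 2 * μ {x | c g x ≠ p k (c g x)} :=
        lintegral_invarianceDefect_le μ (hdefect_meas k n g) (hφ_prob k n)
    _ < ε / 2 + ε / 2 := ENNReal.add_lt_add (hn g hg) (hk g hg)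
    _ = ε := ENNReal.add_halves ε

/-- Suppose `H = ⋃_k H_k` for an increasing sequence of subgroups such that
`H = H_k × H_k'` (internal direct product) for each `k`, with projections `p_k : H → H_k`.
If `p_k ∘ c` is an amenable cocycle for every `k`, then `c` is amenable. -/
theorem amenableCocycle_of_projections_amenable
    {G H X : Type*} [Group G] [Countable G] [Group H] [Countable H]
    [MeasurableSpace H] [MeasurableSingletonClass H]
    [MeasurableSpace X] (μ : Measure X) [IsProbabilityMeasure μ]
    [MulAction G X] (hsmul_meas : ∀ g : G, Measurable fun x : X => g • x)
    [SMulInvariantMeasure G X μ]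
    (c : G → X → H) (hc_meas : ∀ g : G, Measurable (c g))
    (hc_cocycle : ∀ g₁ g₂ : G, ∀ᵐ x ∂μ, c (g₁ * g₂) x = c g₁ (g₂ • x) * c g₂ x)
    (Hk Hk' : ℕ → Subgroup H) (p : ℕ → H →* H)
    (h_mono : Monotone Hk) (h_union : ⋃ k, (Hk k : Set H) = Set.univ)
    -- `H = H_k × H_k'` as an internal direct product:
    (h_compl : ∀ k, (Hk k).IsComplement' (Hk' k))
    (h_comm : ∀ k, ∀ a ∈ Hk k, ∀ b ∈ Hk' k, Commute a b)
    -- `p k` is the corresponding projection onto `H_k`: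
    (hp_mem : ∀ k (h : H), p k h ∈ Hk k)
    (hp_proj : ∀ k (h : H), (p k h)⁻¹ * h ∈ Hk' k)
    (h_amen : ∀ k, AmenableCocycle μ (fun (g : G) (x : X) => g • x)
        (fun g x => p k (c g x))) :
    AmenableCocycle μ (fun (g : G) (x : X) => g • x) c :=
  amenableCocycle_of_projections_amenable_general μ hsmul_meas c hc_meas Hk Hk' p h_mono h_union
    h_compl hp_mem hp_proj h_amen
end

section
/- Let G < K and H be countable groups, K ↷ (X,μ) a pmp action, c : K × X → H a cocycle, and Y ⊆ X a G-invariant measurable set. If the restriction c|(G × Y) is essentially trivial, then c|(G × Z) is essentially trivial, where Z = ⋃_{k ∈ N_K(G)} kY. -/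
open MeasureTheory Filter Topology

/-! A trivialization `φ` of `c|(G × Y)` can be transported along any `k ∈ N_K(G)`:
`x ↦ c(k, k⁻¹x) · φ(k⁻¹x)` trivializes `c|(G × kY)`, since `g' = k⁻¹gk ∈ G` and the cocycle
identity gives `c(k, g'y) c(g', y) = c(kg', y) = c(gk, y) = c(g, ky) c(k, y)`. The sets `kY` are
`G`-invariant, so the countably many trivializations glue: each point uses the first `kY`, in an
enumeration of `N_K(G)`, that contains it. -/

open Set Pointwise

theorem measurable_finset_iff_measurableSet_fiber {X H : Type*} [MeasurableSpace X] [Countable H]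
    {φ : X → Finset H} : Measurable φ ↔ ∀ F, MeasurableSet {x | φ x = F} :=
  ⟨fun h F => h (measurableSet_singleton F), measurable_to_countable'⟩

theorem EssTrivialCocycle.iUnion {Γ H X : Type*} [Group H] [Countable H] [MeasurableSpace X]
    {μ : Measure X} {σ : Γ → X → X} {c : Γ → X → H} {Y : ℕ → Set X}
    (hY_meas : ∀ n, MeasurableSet (Y n)) (hY_inv : ∀ g n, σ g ⁻¹' Y n = Y n)
    (h : ∀ n, EssTrivialCocycle (μ.restrict (Y n)) σ c) :
    EssTrivialCocycle (μ.restrict (⋃ n, Y n)) σ c := by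
  classical
  choose φ hφ_meas hφ_ne hφ using h
  -- points outside the union are sent to the piece `Y 0`, which keeps `Nat.find` total
  let p : ℕ → X → Prop := fun n x => x ∈ Y n ∨ x ∉ ⋃ m, Y m
  have hp : ∀ x, ∃ n, p n x := fun x => by
    by_cases hx : x ∈ ⋃ m, Y m
    · obtain ⟨n, hn⟩ := mem_iUnion.1 hx
      exact ⟨n, Or.inl hn⟩
    · exact ⟨0, Or.inr hx⟩
  have hp_inv : ∀ g n x, p n (σ g x) ↔ p n x := fun g n x => by
    have hU : σ g ⁻¹' (⋃ m, Y m) = ⋃ m, Y m := by simp only [preimage_iUnion, hY_inv]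
    simp only [p, ← mem_preimage (f := σ g), hY_inv, hU]
  refine ⟨fun x => φ (Nat.find (hp x)) x, ?_, fun x => hφ_ne _ x, fun g => ?_⟩
  · exact measurable_finset_iff_measurableSet_fiber.1 (Measurable.find (p := p)
      (fun n => measurable_finset_iff_measurableSet_fiber.2 (hφ_meas n))
      (fun n => (hY_meas n).union (MeasurableSet.iUnion hY_meas).compl) hp)
  · have hall : ∀ᵐ x ∂μ.restrict (⋃ n, Y n), ∀ n, x ∈ Y n →
        (φ n (σ g x) : Set H) = (fun h => c g x * h) '' (φ n x : Set H) :=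
      ae_all_iff.2 fun n => ae_restrict_of_ae ((ae_restrict_iff' (hY_meas n)).1 (hφ n g))
    filter_upwards [hall, ae_restrict_mem (MeasurableSet.iUnion hY_meas)] with x hx hxU
    rw [Nat.find_congr' (hp_inv g _ x)]
    exact hx _ ((Nat.find_spec (hp x)).resolve_right (not_not.2 hxU))

section Normalizer

variable {K H X : Type*} [Group K] [Group H] [MulAction K X]

theorem preimage_smul_smul_set_of_mem_normalizer {G : Subgroup K} {Y : Set X}
    (hY : ∀ g ∈ G, (fun x : X => g • x) ⁻¹' Y = Y) {k : K}
    (hk : k ∈ Subgroup.normalizer (G : Set K)) :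
    ∀ g ∈ G, (fun x : X => g • x) ⁻¹' (k • Y) = k • Y := fun g hg => by
  have hconj : k⁻¹ * g * k ∈ G := (Subgroup.mem_normalizer_iff''.1 hk g).1 hg
  ext x
  have hx : k⁻¹ • g • x = (k⁻¹ * g * k) • k⁻¹ • x := by simp only [smul_smul, mul_inv_cancel_right]
  rw [mem_preimage, mem_smul_set_iff_inv_smul_mem, mem_smul_set_iff_inv_smul_mem, hx,
    ← mem_preimage (f := fun y => (k⁻¹ * g * k) • y), hY _ hconj]

theorem ae_restrict_smul_set_of_ae_restrict [MeasurableSpace X] [MeasurableConstSMul K X]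
    {μ : Measure X} [SMulInvariantMeasure K X μ] {Y : Set X} (hY : MeasurableSet Y) (k : K) {P : X → Prop}
    (h : ∀ᵐ y ∂μ.restrict Y, P y) : ∀ᵐ x ∂μ.restrict (k • Y), P (k⁻¹ • x) := by
  rw [ae_restrict_iff' (hY.const_smul k)]
  simpa only [mem_smul_set_iff_inv_smul_mem] using
    (tendsto_smul_ae μ k⁻¹).eventually ((ae_restrict_iff' hY).1 h)

theorem EssTrivialCocycle.smul_of_mem_normalizer [Countable H] [MeasurableSpace H]
    [MeasurableSingletonClass H] [MeasurableSpace X] [MeasurableConstSMul K X] {μ : Measure X}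
    [SMulInvariantMeasure K X μ] {G : Subgroup K} {c : K → X → H}
    (hc_meas : ∀ k, Measurable (c k))
    (hc_cocycle : ∀ g₁ g₂ : K, ∀ᵐ x ∂μ, c (g₁ * g₂) x = c g₁ (g₂ • x) * c g₂ x)
    {Y : Set X} (hY : MeasurableSet Y) {k : K} (hk : k ∈ Subgroup.normalizer (G : Set K))
    (h : EssTrivialCocycle (μ.restrict Y) (fun (g : G) (x : X) => (g : K) • x)
      (fun (g : G) x => c (g : K) x)) :
    EssTrivialCocycle (μ.restrict (k • Y)) (fun (g : G) (x : X) => (g : K) • x)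
      (fun (g : G) x => c (g : K) x) := by
  classical
  obtain ⟨φ, hφ_meas, hφ_ne, hφ⟩ := h
  refine ⟨fun x => (φ (k⁻¹ • x)).image (c k (k⁻¹ • x) * ·), ?_, fun x => (hφ_ne _).image _, ?_⟩
  · have hpair : Measurable fun x => (c k (k⁻¹ • x), φ (k⁻¹ • x)) :=
      ((hc_meas k).prodMk (measurable_finset_iff_measurableSet_fiber.2 hφ_meas)).comp
        (measurable_const_smul k⁻¹)
    exact measurable_finset_iff_measurableSet_fiber.1
      ((Measurable.of_discrete (f := fun p : H × Finset H => p.2.image (p.1 * ·))).comp hpair)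
  · intro g
    let g' : G := ⟨k⁻¹ * g * k, (Subgroup.mem_normalizer_iff''.1 hk g).1 g.2⟩
    have hkg' : k * g' = g * k := by simp only [g']; group
    filter_upwards [ae_restrict_of_ae ((tendsto_smul_ae μ k⁻¹).eventually (hc_cocycle k g')),
      ae_restrict_of_ae ((tendsto_smul_ae μ k⁻¹).eventually (hc_cocycle g k)),
      ae_restrict_smul_set_of_ae_restrict hY k (hφ g')] with x hkg hgk hφx
    have hx : k⁻¹ • (g : K) • x = (g' : K) • k⁻¹ • x := by
      simp only [g', smul_smul, mul_inv_cancel_right]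
    simp only [Finset.coe_image, hx, hφx, image_image, ← mul_assoc]
    refine image_congr fun h _ => ?_
    rw [← hkg, hkg', hgk, smul_inv_smul]

end Normalizer

theorem essTrivial_extend_to_normalizer_saturation_general
    {K H X : Type*} [Group K] [Countable K] [Group H] [Countable H]
    [MeasurableSpace H] [MeasurableSingletonClass H]
    [MeasurableSpace X] (μ : Measure X)
    [MulAction K X] (hsmul_meas : ∀ k : K, Measurable fun x : X => k • x)
    [SMulInvariantMeasure K X μ]
    (G : Subgroup K)
    (c : K → X → H) (hc_meas : ∀ k : K, Measurable (c k))
    (hc_cocycle : ∀ g₁ g₂ : K, ∀ᵐ x ∂μ, c (g₁ * g₂) x = c g₁ (g₂ • x) * c g₂ x)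
    (Y : Set X) (hY_meas : MeasurableSet Y)
    (hY_inv : ∀ g ∈ G, (fun x : X => g • x) ⁻¹' Y = Y)
    (h_triv : EssTrivialCocycle (μ.restrict Y) (fun (g : G) (x : X) => (g : K) • x)
      (fun (g : G) x => c (g : K) x)) :
    EssTrivialCocycle
      (μ.restrict (⋃ k ∈ Subgroup.normalizer (G : Set K), (fun x : X => k • x) '' Y))
      (fun (g : G) (x : X) => (g : K) • x) (fun (g : G) x => c (g : K) x) := by
  have : MeasurableConstSMul K X := ⟨hsmul_meas⟩
  obtain ⟨e, he⟩ := exists_surjective_nat (Subgroup.normalizer (G : Set K))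
  have hZ : ⋃ k ∈ Subgroup.normalizer (G : Set K), (fun x : X => k • x) '' Y =
      ⋃ n, (e n : K) • Y := by
    rw [he.iUnion_comp (fun k => (k : K) • Y)]
    simp only [image_smul]
    exact biUnion_eq_iUnion _ fun k _ => k • Y
  rw [hZ]
  exact EssTrivialCocycle.iUnion (fun n => hY_meas.const_smul _)
    (fun g n => preimage_smul_smul_set_of_mem_normalizer hY_inv (e n).2 g g.2)
    (fun n => h_triv.smul_of_mem_normalizer hc_meas hc_cocycle hY_meas (e n).2)

/-- Lemma `normalizer` (1). Let `G < K`, `K ↷ (X,μ)` pmp, `c : K × X → H`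
a cocycle and `Y ⊆ X` a `G`-invariant measurable set. If `c|(G × Y)` is essentially trivial,
then so is `c|(G × Z)`, where `Z = ⋃_{k ∈ N_K(G)} kY`. -/
theorem essTrivial_extend_to_normalizer_saturation
    {K H X : Type*} [Group K] [Countable K] [Group H] [Countable H]
    [MeasurableSpace H] [MeasurableSingletonClass H]
    [MeasurableSpace X] (μ : Measure X) [IsProbabilityMeasure μ]
    [MulAction K X] (hsmul_meas : ∀ k : K, Measurable fun x : X => k • x)
    [SMulInvariantMeasure K X μ]
    (G : Subgroup K)
    (c : K → X → H) (hc_meas : ∀ k : K, Measurable (c k))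
    (hc_cocycle : ∀ g₁ g₂ : K, ∀ᵐ x ∂μ, c (g₁ * g₂) x = c g₁ (g₂ • x) * c g₂ x)
    (Y : Set X) (hY_meas : MeasurableSet Y)
    (hY_inv : ∀ g ∈ G, (fun x : X => g • x) ⁻¹' Y = Y)
    (h_triv : EssTrivialCocycle (μ.restrict Y) (fun (g : G) (x : X) => (g : K) • x)
      (fun (g : G) x => c (g : K) x)) :
    EssTrivialCocycle
      (μ.restrict (⋃ k ∈ Subgroup.normalizer (G : Set K), (fun x : X => k • x) '' Y))
      (fun (g : G) (x : X) => (g : K) • x) (fun (g : G) x => c (g : K) x) :=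
  essTrivial_extend_to_normalizer_saturation_general μ hsmul_meas G c hc_meas hc_cocycle Y hY_meas
    hY_inv h_triv
end

section
/- Let G, H be countable groups with normal subgroups M ⊴ G, N ⊴ H, and assume Ḡ = G/M is ICC. Let (Ω,m) be an ME-coupling of G and H with fundamental domain Y₀ for the G-action, associated ME-cocycle c : H × Y₀ → G, and let c̄ be the composition of c with the projection G → Ḡ. If the restriction c̄|(N × Y₀) is essentially trivial, then there exists a fundamental domain Y ⊆ Ω for the G-action such that NY ⊆ MY. -/
open MeasureTheory Filter Topology

/-- `(Ω, m)` together with commuting measure-preserving actions `σ` of `G` and `τ` of `H`,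
each admitting a finite-measure fundamental domain, is a measure equivalence coupling. -/
structure MECoupling (G H : Type*) {Ω : Type*} [Group G] [Group H]
    [MeasurableSpace Ω] (m : MeasureTheory.Measure Ω)
    (σ : G → Ω → Ω) (τ : H → Ω → Ω) : Prop where
  σ_one : σ 1 = id
  σ_mul : ∀ g₁ g₂, σ (g₁ * g₂) = σ g₁ ∘ σ g₂
  τ_one : τ 1 = id
  τ_mul : ∀ h₁ h₂, τ (h₁ * h₂) = τ h₁ ∘ τ h₂
  comm : ∀ g h, σ g ∘ τ h = τ h ∘ σ g
  σ_mp : ∀ g, MeasureTheory.MeasurePreserving (σ g) m m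
  τ_mp : ∀ h, MeasureTheory.MeasurePreserving (τ h) m m
  exists_dom_G : ∃ Y : Set Ω, MeasurableSet Y ∧ m Y < ⊤ ∧ ∀ᵐ ω ∂m, ∃! g : G, σ g ω ∈ Y
  exists_dom_H : ∃ X : Set Ω, MeasurableSet X ∧ m X < ⊤ ∧ ∀ᵐ ω ∂m, ∃! h : H, τ h ω ∈ X

/-- Two countable groups are measure equivalent if they admit an ME coupling. -/
def MeasureEquivalent (G H : Type*) [Group G] [Group H] : Prop :=
  ∃ (Ω : Type) (_ : MeasurableSpace Ω) (m : MeasureTheory.Measure Ω)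
    (σ : G → Ω → Ω) (τ : H → Ω → Ω), MECoupling G H m σ τ

/-- A group is amenable iff it satisfies Reiter's property: there are `ℓ¹` probability
vectors that are asymptotically invariant under left translation. -/
def IsAmenableGroup (G : Type*) [Group G] : Prop :=
  ∃ φ : ℕ → G → ℝ, (∀ n, IsProbVec (φ n)) ∧
    ∀ g : G, Filter.Tendsto (fun n => l1dist (lshift g (φ n)) (φ n)) Filter.atTop (nhds 0)
/-- A group is ICC if every nontrivial conjugacy class is infinite. -/
def IsICC (G : Type*) [Group G] : Prop :=
  ∀ g : G, g ≠ 1 → {h : G | ∃ k : G, k * g * k⁻¹ = h}.Infinite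
/-!
Transporting the trivialising map of `c̄|N` along the `G`-orbits gives a map `Φ : Ω → F(Ḡ)` which
is a.e. `G`-equivariant and `N`-invariant. Among all such maps pick one, `P`, of a.e. least
cardinality. As `N` is normal, `x ↦ P (h • x)` is again such a map for `h ∈ H`, and minimality
forces `P (h • x) = P x • δ` for some `δ ∈ Ḡ`. Hence `P x / P x` is `H`-invariant and is conjugated
by `ḡ` under `g ∈ G`: its law on a finite-measure fundamental domain of `H` is a
conjugation-invariant random finite subset of the ICC group `Ḡ`, so it is `{1}` and `P` is
singleton-valued, `P x = {E x}`. Finally, for a section `ε` of `G → Ḡ`, the set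
`Y = {ε (E y)⁻¹ • y | y ∈ Y₀}` is a fundamental domain on which `E = 1`, and `N`-invariance of `E`
gives `N Y ⊆ M Y`.
-/

open scoped Pointwise

namespace MeasureTheory

variable {G H α : Type*} [Group G] [Group H] [MulAction G α] [MulAction H α] [MeasurableSpace α]
  {μ : Measure α} {s t A : Set α}

theorem ae_smul_of_ae [MeasurableConstSMul G α] [SMulInvariantMeasure G α μ] {p : α → Prop}
    (h : ∀ᵐ x ∂μ, p x) (g : G) : ∀ᵐ x ∂μ, p (g • x) :=
  (measurePreserving_smul g μ).quasiMeasurePreserving.ae h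

theorem IsFundamentalDomain.of_ae_existsUnique (hs : NullMeasurableSet s μ)
    (h : ∀ᵐ x ∂μ, ∃! g : G, g • x ∈ s) : IsFundamentalDomain G s μ where
  nullMeasurableSet := hs
  ae_covers := h.mono fun _ hx => hx.exists
  aedisjoint g₁ g₂ hne := by
    refine measure_mono_null (fun x hx => ?_) (ae_iff.1 h)
    simp only [Set.mem_inter_iff, Set.mem_smul_set_iff_inv_smul_mem] at hx
    exact fun hu => hne (inv_injective (hu.unique hx.1 hx.2))

theorem exists_smul_invariant_ae_eq [Countable G] [MeasurableConstSMul G α]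
    (hA : MeasurableSet A) (hinv : ∀ g : G, (g • ·) ⁻¹' A =ᵐ[μ] A) :
    ∃ A' : Set α, MeasurableSet A' ∧ (∀ g : G, (g • ·) ⁻¹' A' = A') ∧ A' =ᵐ[μ] A := by
  refine ⟨⋂ g : G, (g • ·) ⁻¹' A, .iInter fun g => measurable_const_smul g hA,
    fun g => ?_, by simpa [Set.iInter_const] using Filter.EventuallyEq.countable_iInter hinv⟩
  simp only [Set.preimage_iInter, Set.preimage_preimage, smul_smul]
  exact (Equiv.mulRight g).surjective.iInter_comp fun k => (k • ·) ⁻¹' A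

theorem exists_ae_le_of_forall_exists_le [IsFiniteMeasure μ] {𝓕 : Set (α → ℕ)}
    (hne : 𝓕.Nonempty) (hmeas : ∀ f ∈ 𝓕, Measurable f)
    (hinf : ∀ u : ℕ → α → ℕ, (∀ i, u i ∈ 𝓕) → ∃ f ∈ 𝓕, ∀ i, f ≤ u i) :
    ∃ f ∈ 𝓕, ∀ g ∈ 𝓕, f ≤ᵐ[μ] g := by
  -- `J` is bounded and strictly decreasing in `f`, so a maximiser of `J` on `𝓕` is an a.e. least
  -- element of `𝓕`; a maximiser exists since `𝓕` is closed under countable lower bounds.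
  set w : ℕ → ENNReal := fun n => ((n : ENNReal) + 1)⁻¹ with hw
  have hw_anti : Antitone w := fun m n hmn => ENNReal.inv_le_inv.2 (by gcongr)
  set J : (α → ℕ) → ENNReal := fun f => ∫⁻ x, w (f x) ∂μ
  have hJ_anti : ∀ {f g : α → ℕ}, f ≤ g → J g ≤ J f := fun hfg =>
    lintegral_mono fun x => hw_anti (hfg x)
  have hJ_ne_top : ∀ f, J f ≠ ⊤ := fun f => ne_top_of_le_ne_top (measure_ne_top μ Set.univ) <|
    (lintegral_mono fun x => ENNReal.inv_le_one.2 le_add_self).trans_eq (lintegral_one)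
  obtain ⟨u, -, hu_lim, hu_mem⟩ := exists_seq_tendsto_sSup (hne.image J) (OrderTop.bddAbove _)
  choose fs hfs hJfs using hu_mem
  obtain ⟨f, hf, hf_le⟩ := hinf fs hfs
  have hJf : sSup (J '' 𝓕) ≤ J f :=
    le_of_tendsto' hu_lim fun n => hJfs n ▸ hJ_anti (hf_le n)
  refine ⟨f, hf, fun g hg => ?_⟩
  obtain ⟨k, hk, hk_le⟩ := hinf (fun i => if i = 0 then f else g) fun i => by
    split_ifs <;> assumption
  have hkf : k ≤ f := by simpa using hk_le 0
  have hkg : k ≤ g := by simpa using hk_le 1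
  have hae : (fun x => w (f x)) =ᵐ[μ] fun x => w (k x) :=
    ae_eq_of_ae_le_of_lintegral_le (Eventually.of_forall fun x => hw_anti (hkf x)) (hJ_ne_top f)
      ((measurable_from_nat (f := w)).comp (hmeas k hk)).aemeasurable
      ((le_sSup (Set.mem_image_of_mem J hk)).trans hJf)
  filter_upwards [hae] with x hx
  have : f x = k x := by simpa [hw] using hx
  exact this ▸ hkg x

variable [Countable G] [MeasurableConstSMul G α] [SMulInvariantMeasure G α μ]

theorem IsFundamentalDomain.measure_inter_eq_of_ae_invariant (hs : IsFundamentalDomain G s μ)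
    (ht : IsFundamentalDomain G t μ) (hA : MeasurableSet A)
    (hinv : ∀ g : G, (g • ·) ⁻¹' A =ᵐ[μ] A) : μ (A ∩ s) = μ (A ∩ t) := by
  obtain ⟨A', hA'm, hA'inv, hA'A⟩ := exists_smul_invariant_ae_eq hA hinv
  rw [← measure_congr (hA'A.inter (ae_eq_refl s)), ← measure_congr (hA'A.inter (ae_eq_refl t))]
  exact hs.measure_set_eq ht hA'm hA'inv

theorem IsFundamentalDomain.measure_eq_zero_of_ae_invariant (hs : IsFundamentalDomain G s μ)
    (hA : MeasurableSet A) (hinv : ∀ g : G, (g • ·) ⁻¹' A =ᵐ[μ] A) (h0 : μ (A ∩ s) = 0) :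
    μ A = 0 := by
  obtain ⟨A', hA'm, hA'inv, hA'A⟩ := exists_smul_invariant_ae_eq hA hinv
  rw [← measure_congr hA'A]
  refine hs.measure_zero_of_invariant A' (fun g => ?_) ?_
  · rw [← Set.preimage_smul_inv, hA'inv]
  · rwa [measure_congr (hA'A.inter (ae_eq_refl s))]

theorem exists_smul_invariant_measurableSet_of_ae [Countable H] [MeasurableConstSMul H α]
    [SMulInvariantMeasure H α μ] [SMulCommClass G H α] {p : α → Prop} (h : ∀ᵐ x ∂μ, p x) :
    ∃ C : Set α, MeasurableSet C ∧ (∀ᵐ x ∂μ, x ∈ C) ∧ (∀ x ∈ C, p x) ∧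
      (∀ g : G, ∀ x ∈ C, g • x ∈ C) ∧ (∀ k : H, ∀ x ∈ C, k • x ∈ C) := by
  obtain ⟨C₀, hC₀, hC₀m, hpC₀⟩ := h.exists_measurable_mem
  refine ⟨⋂ (g : G) (k : H), (fun x => g • k • x) ⁻¹' C₀,
    .iInter fun g => .iInter fun k => (measurable_const_smul g).comp (measurable_const_smul k)
      hC₀m, ?_, fun x hx => hpC₀ x ?_, fun g' x hx => ?_, fun k' x hx => ?_⟩
  · simp only [Set.mem_iInter, Set.mem_preimage, ae_all_iff]
    exact fun g k => ae_smul_of_ae (ae_smul_of_ae hC₀ g) k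
  · simpa using Set.mem_iInter₂.1 hx 1 1
  · simp only [Set.mem_iInter, Set.mem_preimage] at hx ⊢
    intro g k
    rw [← smul_comm g' k x, smul_smul]
    exact hx _ _
  · simp only [Set.mem_iInter, Set.mem_preimage] at hx ⊢
    intro g k
    rw [smul_smul]
    exact hx _ _

end MeasureTheory

-- The set `{x | ∃ k, k • x ∈ Y₀ ∧ κ (k • x) = k}` is `{(κ y)⁻¹ • y | y ∈ Y₀}`.
theorem existsUnique_smul_mem_moved {G Ω : Type*} [Group G] [MulAction G Ω] {Y₀ : Set Ω}
    (κ : Ω → G) {x : Ω} (hx : ∃! g : G, g • x ∈ Y₀) :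
    ∃! g : G, ∃ k : G, k • g • x ∈ Y₀ ∧ κ (k • g • x) = k := by
  obtain ⟨g₀, hg₀, huniq⟩ := hx
  refine ⟨(κ (g₀ • x))⁻¹ * g₀, ⟨κ (g₀ • x), ?_⟩, fun g ⟨k, hk, hκ⟩ => ?_⟩
  · rw [smul_smul, mul_inv_cancel_left]
    exact ⟨hg₀, rfl⟩
  · rw [smul_smul] at hk hκ
    rw [← huniq _ hk, hκ, inv_mul_cancel_left]

namespace Finset

variable {Γ : Type*} [Group Γ] [DecidableEq Γ]

theorem mem_mulAut_conj_smul {k v : Γ} {F : Finset Γ} :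
    v ∈ MulAut.conj k • F ↔ k⁻¹ * v * k ∈ F := by
  rw [← inv_smul_mem_iff, ← map_inv, MulAut.smul_def, MulAut.conj_apply, inv_inv]

open MulOpposite in
theorem op_smul_finset_div_op_smul_finset (δ : Γ) (F : Finset Γ) :
    (op δ • F) / (op δ • F) = F / F := by
  ext v
  simp only [mem_div, mem_smul_finset, smul_eq_mul_unop, unop_op]
  constructor
  · rintro ⟨_, ⟨a, ha, rfl⟩, _, ⟨b, hb, rfl⟩, rfl⟩
    exact ⟨a, ha, b, hb, (mul_div_mul_right_eq_div a b δ).symm⟩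
  · rintro ⟨a, ha, b, hb, rfl⟩
    exact ⟨_, ⟨a, ha, rfl⟩, _, ⟨b, hb, rfl⟩, mul_div_mul_right_eq_div a b δ⟩

theorem smul_finset_div_smul_finset (q : Γ) (F : Finset Γ) :
    (q • F) / (q • F) = MulAut.conj q • (F / F) := by
  ext v
  rw [mem_mulAut_conj_smul]
  simp only [mem_div, mem_smul_finset, smul_eq_mul]
  constructor
  · rintro ⟨_, ⟨a, ha, rfl⟩, _, ⟨b, hb, rfl⟩, rfl⟩
    exact ⟨a, ha, b, hb, by simp only [div_eq_mul_inv]; group⟩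
  · rintro ⟨a, ha, b, hb, h⟩
    refine ⟨_, ⟨a, ha, rfl⟩, _, ⟨b, hb, rfl⟩, ?_⟩
    rw [show v = q * (a / b) * q⁻¹ by rw [h]; group]
    simp only [div_eq_mul_inv]
    group

theorem card_le_one_of_div_subset_one {F : Finset Γ} (h : F / F ⊆ {1}) : F.card ≤ 1 :=
  card_le_one.2 fun _ ha _ hb => div_eq_one.1 (mem_singleton.1 (h (div_mem_div ha hb)))

end Finset

theorem IsICC.ae_subset_one_of_conj_invariant {Γ X : Type*} [Group Γ] [Countable Γ]
    [DecidableEq Γ] [MeasurableSpace X] {μ : Measure X} [IsFiniteMeasure μ] (hΓ : IsICC Γ)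
    {S : X → Finset Γ} (hS : ∀ B : Set (Finset Γ), MeasurableSet (S ⁻¹' B))
    (hconj : ∀ (k : Γ) (B : Set (Finset Γ)),
      μ ((fun x => MulAut.conj k • S x) ⁻¹' B) = μ (S ⁻¹' B)) :
    ∀ᵐ x ∂μ, S x ⊆ {1} := by
  set A : Γ → ℕ → Set X := fun v j => S ⁻¹' {F | v ∈ F ∧ F.card ≤ j} with hA
  have hA_conj : ∀ k v j, μ (A (k * v * k⁻¹) j) = μ (A v j) := fun k v j => by
    rw [← hconj k⁻¹ {F | v ∈ F ∧ F.card ≤ j}]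
    congr 1
    ext x
    simp only [hA, Set.mem_preimage, Set.mem_ofPred_eq, Finset.mem_mulAut_conj_smul, inv_inv,
      Finset.card_smul_finset]
  have hA_sum : ∀ (T : Finset Γ) j, ∑ v ∈ T, μ (A v j) ≤ j * μ Set.univ := fun T j => by
    classical
    calc ∑ v ∈ T, μ (A v j) = ∫⁻ x, ∑ v ∈ T, (A v j).indicator 1 x ∂μ := by
          rw [lintegral_finsetSum _ fun v _ => measurable_one.indicator (hS _)]
          exact Finset.sum_congr rfl fun v _ => (lintegral_indicator_one (hS _)).symm
      _ ≤ ∫⁻ _, (j : ENNReal) ∂μ := lintegral_mono fun x => ?_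
      _ = j * μ Set.univ := lintegral_const _
    simp only [Set.indicator_apply, Pi.one_apply, hA, Set.mem_preimage, Set.mem_ofPred_eq,
      Finset.sum_boole]
    by_cases hj : (S x).card ≤ j
    · refine Nat.cast_le.2 ((Finset.card_le_card fun v hv => ?_).trans hj)
      exact (Finset.mem_filter.1 hv).2.1
    · simp [hj]
  -- The `n` conjugates in `T` give `n` sets of equal measure covering each point at most `j` times.
  have hA_null : ∀ v, v ≠ 1 → ∀ j, μ (A v j) = 0 := fun v hv j => by
    by_contra h0
    obtain ⟨n, hn⟩ := ENNReal.exists_nat_mul_gt h0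
      (ENNReal.mul_ne_top (ENNReal.natCast_ne_top j) (measure_ne_top μ _))
    obtain ⟨T, hT, rfl⟩ := (hΓ v hv).exists_subset_card_eq n
    have hsum : (T.card : ENNReal) * μ (A v j) = ∑ w ∈ T, μ (A w j) := by
      rw [← nsmul_eq_mul, ← Finset.sum_const]
      refine Finset.sum_congr rfl fun w hw => ?_
      obtain ⟨k, rfl⟩ := hT hw
      exact (hA_conj k v j).symm
    exact lt_irrefl _ (hn.trans_le (hsum.le.trans (hA_sum T j)))
  refine measure_mono_null (fun x hx => ?_)
    (measure_iUnion_null fun v : {v : Γ // v ≠ 1} => measure_iUnion_null (hA_null v v.2))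
  obtain ⟨v, hvS, hv⟩ := Finset.not_subset.1 hx
  exact Set.mem_iUnion₂.2 ⟨⟨v, by simpa using hv⟩, (S x).card, hvS, le_rfl⟩

section EquivariantFinsetMap

variable {G H Q Ω : Type*} [Group G] [Group H] [Group Q] [DecidableEq Q]
  [MulAction G Ω] [MulAction H Ω] [MeasurableSpace Ω]

structure IsEquivariantFinsetMap (μ : Measure Ω) (π : G →* Q) (N : Subgroup H)
    (Φ : Ω → Finset Q) : Prop where
  measurableSet_preimage : ∀ S : Set (Finset Q), MeasurableSet (Φ ⁻¹' S)
  nonempty : ∀ x, (Φ x).Nonempty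
  map_smul : ∀ g : G, ∀ᵐ x ∂μ, Φ (g • x) = π g • Φ x
  map_smul_of_mem : ∀ n ∈ N, ∀ᵐ x ∂μ, Φ (n • x) = Φ x

variable {μ : Measure Ω} {π : G →* Q} {N : Subgroup H} {Φ Ψ P : Ω → Finset Q}

namespace IsEquivariantFinsetMap

theorem measurable_card (hΦ : IsEquivariantFinsetMap μ π N Φ) :
    Measurable fun x => (Φ x).card :=
  fun S _ => hΦ.measurableSet_preimage (Finset.card ⁻¹' S)

theorem card_smul (hΦ : IsEquivariantFinsetMap μ π N Φ) (g : G) :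
    ∀ᵐ x ∂μ, (Φ (g • x)).card = (Φ x).card :=
  (hΦ.map_smul g).mono fun x hx => by rw [hx, Finset.card_smul_finset]

theorem comp_smul [N.Normal] [SMulCommClass G H Ω] [MeasurableConstSMul H Ω]
    [SMulInvariantMeasure H Ω μ] (hΦ : IsEquivariantFinsetMap μ π N Φ) (h : H) :
    IsEquivariantFinsetMap μ π N fun x => Φ (h • x) where
  measurableSet_preimage S := measurable_const_smul h (hΦ.measurableSet_preimage S)
  nonempty x := hΦ.nonempty _
  map_smul g := (ae_smul_of_ae (hΦ.map_smul g) h).mono fun x hx => by rwa [smul_comm g h x] at hx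
  map_smul_of_mem n hn := by
    filter_upwards [ae_smul_of_ae (hΦ.map_smul_of_mem _ (Subgroup.Normal.conj_mem ‹_› n hn h)) h]
      with x hx
    rwa [smul_smul, inv_mul_cancel_right, ← smul_smul] at hx

theorem map₂ [Countable Q] (hΦ : IsEquivariantFinsetMap μ π N Φ)
    (hΨ : IsEquivariantFinsetMap μ π N Ψ) (f : Finset Q → Finset Q → Finset Q)
    (hf : ∀ (q : Q) A B, f (q • A) (q • B) = q • f A B)
    (hne : ∀ A B, A.Nonempty → B.Nonempty → (f A B).Nonempty) :
    IsEquivariantFinsetMap μ π N fun x => f (Φ x) (Ψ x) where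
  measurableSet_preimage S := by
    have : (fun x => f (Φ x) (Ψ x)) ⁻¹' S = ⋃ A : Finset Q, Φ ⁻¹' {A} ∩ Ψ ⁻¹' {B | f A B ∈ S} := by
      ext x; simp
    rw [this]
    exact .iUnion fun A => (hΦ.measurableSet_preimage _).inter (hΨ.measurableSet_preimage _)
  nonempty x := hne _ _ (hΦ.nonempty x) (hΨ.nonempty x)
  map_smul g := by
    filter_upwards [hΦ.map_smul g, hΨ.map_smul g] with x h₁ h₂
    rw [h₁, h₂, hf]
  map_smul_of_mem n hn := by
    filter_upwards [hΦ.map_smul_of_mem n hn, hΨ.map_smul_of_mem n hn] with x h₁ h₂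
    rw [h₁, h₂]

theorem exists_forall_card_le {P : ℕ → Ω → Finset Q}
    (hP : ∀ i, IsEquivariantFinsetMap μ π N (P i)) :
    ∃ Φ, IsEquivariantFinsetMap μ π N Φ ∧ ∀ i x, (Φ x).card ≤ (P i x).card := by
  classical
  have hmin : ∀ x, ∃ i, ∀ j, (P i x).card ≤ (P j x).card := fun x =>
    ⟨Function.argmin fun i => (P i x).card, fun j => Function.argmin_le (fun i => (P i x).card) j⟩
  set idx : Ω → ℕ := fun x => Nat.find (hmin x)
  have hidx_meas : Measurable idx := measurable_find hmin fun i => by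
    simp only [Set.ofPred_forall]
    exact .iInter fun j => measurableSet_le (hP i).measurable_card (hP j).measurable_card
  -- `idx` only depends on the cardinalities, which are invariant along the orbits.
  have hidx_eq : ∀ {x y}, (∀ i, (P i y).card = (P i x).card) → idx y = idx x := fun h =>
    Nat.find_congr' fun {i} => by simp only [h]
  refine ⟨fun x => P (idx x) x, ⟨fun S => ?_, fun x => (hP _).nonempty x, fun g => ?_,
    fun n hn => ?_⟩, fun i x => Nat.find_spec (hmin x) i⟩
  · have : (fun x => P (idx x) x) ⁻¹' S = ⋃ i, idx ⁻¹' {i} ∩ P i ⁻¹' S := by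
      ext x; simp
    rw [this]
    exact .iUnion fun i => (hidx_meas (measurableSet_singleton i)).inter
      ((hP i).measurableSet_preimage S)
  · filter_upwards [ae_all_iff.2 fun i => (hP i).map_smul g] with x hx
    show P (idx (g • x)) (g • x) = π g • P (idx x) x
    have e : idx (g • x) = idx x := hidx_eq fun i => by rw [hx i, Finset.card_smul_finset]
    rw [e, hx]
  · filter_upwards [ae_all_iff.2 fun i => (hP i).map_smul_of_mem n hn] with x hx
    show P (idx (n • x)) (n • x) = P (idx x) x
    have e : idx (n • x) = idx x := hidx_eq fun i => by rw [hx i]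
    rw [e, hx]

end IsEquivariantFinsetMap

def IsMinimalEquivariantFinsetMap (μ : Measure Ω) (π : G →* Q) (N : Subgroup H)
    (Φ : Ω → Finset Q) : Prop :=
  IsEquivariantFinsetMap μ π N Φ ∧
    ∀ Ψ, IsEquivariantFinsetMap μ π N Ψ → ∀ᵐ x ∂μ, (Φ x).card ≤ (Ψ x).card

theorem exists_isMinimalEquivariantFinsetMap [Countable G] [MeasurableConstSMul G Ω]
    [SMulInvariantMeasure G Ω μ] {Y₀ : Set Ω} (hY₀ : IsFundamentalDomain G Y₀ μ)
    (hY₀_fin : μ Y₀ ≠ ⊤) (hΦ : IsEquivariantFinsetMap μ π N Φ) :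
    ∃ P, IsMinimalEquivariantFinsetMap μ π N P := by
  have : IsFiniteMeasure (μ.restrict Y₀) := isFiniteMeasure_restrict.2 hY₀_fin
  obtain ⟨_, ⟨P, hP, rfl⟩, hPmin⟩ := exists_ae_le_of_forall_exists_le (μ := μ.restrict Y₀)
    (𝓕 := {f | ∃ P, IsEquivariantFinsetMap μ π N P ∧ f = fun x => (P x).card})
    ⟨_, Φ, hΦ, rfl⟩ (by rintro _ ⟨P, hP, rfl⟩; exact hP.measurable_card) fun u hu => by
      choose P hP hPu using hu
      obtain ⟨Φ, hΦ, hle⟩ := IsEquivariantFinsetMap.exists_forall_card_le hP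
      exact ⟨_, ⟨Φ, hΦ, rfl⟩, fun i x => by simpa only [hPu i] using hle i x⟩
  refine ⟨P, hP, fun Ψ hΨ => ae_iff.2 ?_⟩
  simp only [not_le]
  -- The set where `Ψ` beats `P` is `G`-invariant, so it is null as soon as it is null in `Y₀`.
  have hT : MeasurableSet {x | (Ψ x).card < (P x).card} :=
    measurableSet_lt hΨ.measurable_card hP.measurable_card
  refine hY₀.measure_eq_zero_of_ae_invariant hT (fun g => ?_) ?_
  · filter_upwards [hP.card_smul g, hΨ.card_smul g] with x h₁ h₂
    change ((Ψ (g • x)).card < (P (g • x)).card) = ((Ψ x).card < (P x).card)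
    rw [h₁, h₂]
  · have := ae_iff.1 (hPmin _ ⟨Ψ, hΨ, rfl⟩)
    rw [Measure.restrict_apply (by simpa only [not_le] using hT)] at this
    simpa only [not_le] using this

namespace IsMinimalEquivariantFinsetMap

variable [N.Normal] [SMulCommClass G H Ω] [MeasurableConstSMul H Ω] [SMulInvariantMeasure H Ω μ]

theorem card_smul_le (hP : IsMinimalEquivariantFinsetMap μ π N P) (h : H) :
    ∀ᵐ x ∂μ, (P (h • x)).card ≤ (P x).card := by
  filter_upwards [ae_smul_of_ae (hP.2 _ (hP.1.comp_smul h⁻¹)) h] with x hx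
  rwa [inv_smul_smul] at hx

open MulOpposite in
theorem smul_eq_op_smul_of_nonempty [Countable Q] (hP : IsMinimalEquivariantFinsetMap μ π N P)
    (h : H) (δ : Q) :
    ∀ᵐ x ∂μ, (P (h • x) ∩ op δ • P x).Nonempty → P (h • x) = op δ • P x := by
  -- Cutting `P (h • x)` down to its overlap with `op δ • P x` gives another equivariant map, so by
  -- minimality the overlap, when nonempty, is all of `op δ • P x` and of `P (h • x)`.
  set f : Finset Q → Finset Q → Finset Q := fun A B =>
    if (A ∩ op δ • B).Nonempty then A ∩ op δ • B else A with hf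
  have hR := (hP.1.comp_smul h).map₂ hP.1 f (fun q A B => ?_) (fun A B hA _ => ?_)
  · filter_upwards [hP.2 _ hR, hP.card_smul_le h] with x hle hcard hne
    simp only [hf, if_pos hne] at hle
    have hinter : P (h • x) ∩ op δ • P x = op δ • P x :=
      Finset.eq_of_subset_of_card_le Finset.inter_subset_right
        (by rwa [Finset.card_smul_finset])
    exact (Finset.eq_of_subset_of_card_le (hinter ▸ Finset.inter_subset_left)
      (by rwa [Finset.card_smul_finset])).symm
  · simp only [hf, ← smul_comm q (op δ) B, ← Finset.smul_finset_inter, Finset.smul_finset_nonempty]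
    split_ifs <;> rfl
  · simp only [hf]
    split_ifs with hne
    exacts [hne, hA]

open MulOpposite in
theorem exists_op_smul_eq [Countable Q] (hP : IsMinimalEquivariantFinsetMap μ π N P) (h : H) :
    ∀ᵐ x ∂μ, ∃ δ : Q, P (h • x) = op δ • P x := by
  filter_upwards [ae_all_iff.2 (hP.smul_eq_op_smul_of_nonempty h)] with x hx
  obtain ⟨u, hu⟩ := hP.1.nonempty (h • x)
  obtain ⟨u₀, hu₀⟩ := hP.1.nonempty x
  refine ⟨u₀⁻¹ * u, hx _ ⟨u, Finset.mem_inter.2 ⟨hu, ?_⟩⟩⟩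
  simpa [MulOpposite.smul_eq_mul_unop] using
    Finset.smul_mem_smul_finset (a := op (u₀⁻¹ * u)) hu₀

theorem ae_card_eq_one [Countable H] [Countable Q] [MeasurableConstSMul G Ω]
    [SMulInvariantMeasure G Ω μ] (hQ : IsICC Q)
    (hπ : Function.Surjective π) {X : Set Ω} (hX : IsFundamentalDomain H X μ)
    (hX_fin : μ X ≠ ⊤) (hP : IsMinimalEquivariantFinsetMap μ π N P) :
    ∀ᵐ x ∂μ, (P x).card = 1 := by
  set D : Ω → Finset Q := fun x => P x / P x with hD
  have hD_meas : ∀ B, MeasurableSet (D ⁻¹' B) := fun B =>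
    hP.1.measurableSet_preimage {F | F / F ∈ B}
  have hD_H : ∀ (h : H) B, (h • ·) ⁻¹' (D ⁻¹' B) =ᵐ[μ] D ⁻¹' B := fun h B => by
    filter_upwards [hP.exists_op_smul_eq h] with x ⟨δ, hδ⟩
    change (D (h • x) ∈ B) = (D x ∈ B)
    simp only [hD, hδ, Finset.op_smul_finset_div_op_smul_finset]
  have hD_G : ∀ g : G, ∀ᵐ x ∂μ, D (g • x) = MulAut.conj (π g) • D x := fun g => by
    filter_upwards [hP.1.map_smul g] with x hx
    simp only [hD, hx, Finset.smul_finset_div_smul_finset]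
  have : IsFiniteMeasure (μ.restrict X) := isFiniteMeasure_restrict.2 hX_fin
  have hD_one : ∀ᵐ x ∂μ.restrict X, D x ⊆ {1} :=
    hQ.ae_subset_one_of_conj_invariant hD_meas fun k B => by
      obtain ⟨g, rfl⟩ := hπ k
      have hB : (fun x => MulAut.conj (π g) • D x) ⁻¹' B =ᵐ[μ] (g • ·) ⁻¹' (D ⁻¹' B) := by
        filter_upwards [hD_G g] with x hx
        change (_ ∈ B) = (D (g • x) ∈ B)
        rw [hx]
      -- `g • X` is another fundamental domain for `H`, and `D ⁻¹' B` is `H`-invariant.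
      calc μ.restrict X ((fun x => MulAut.conj (π g) • D x) ⁻¹' B)
          = μ ((g • ·) ⁻¹' (D ⁻¹' B ∩ g • X)) := by
            rw [measure_congr (ae_restrict_of_ae hB),
              Measure.restrict_apply (measurable_const_smul g (hD_meas B)), Set.preimage_inter,
              Set.preimage_smul g (g • X), inv_smul_smul]
        _ = μ (D ⁻¹' B ∩ g • X) := measure_preimage_smul μ g _
        _ = μ (D ⁻¹' B ∩ X) :=
            (hX.smul_of_comm g).measure_inter_eq_of_ae_invariant hX (hD_meas B) (hD_H · B)
        _ = μ.restrict X (D ⁻¹' B) := (Measure.restrict_apply (hD_meas B)).symm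
  have hbad : μ (D ⁻¹' {F | ¬F ⊆ {1}}) = 0 :=
    hX.measure_eq_zero_of_ae_invariant (hD_meas _) (hD_H · _) <| by
      rw [← Measure.restrict_apply (hD_meas _)]
      exact ae_iff.1 hD_one
  filter_upwards [measure_eq_zero_iff_ae_notMem.1 hbad] with x hx
  exact le_antisymm (Finset.card_le_one_of_div_subset_one (not_not.1 hx)) (hP.1.nonempty x).card_pos

end IsMinimalEquivariantFinsetMap

theorem exists_isEquivariantFinsetMap_singleton [Countable G] [Countable H] [Countable Q]
    [N.Normal] [SMulCommClass G H Ω] [MeasurableConstSMul G Ω] [MeasurableConstSMul H Ω]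
    [SMulInvariantMeasure G Ω μ] [SMulInvariantMeasure H Ω μ] (hQ : IsICC Q)
    (hπ : Function.Surjective π) {Y₀ X : Set Ω} (hY₀ : IsFundamentalDomain G Y₀ μ)
    (hY₀_fin : μ Y₀ ≠ ⊤) (hX : IsFundamentalDomain H X μ) (hX_fin : μ X ≠ ⊤)
    (hΦ : IsEquivariantFinsetMap μ π N Φ) :
    ∃ E : Ω → Q, IsEquivariantFinsetMap μ π N fun x => {E x} := by
  obtain ⟨P, hP⟩ := exists_isMinimalEquivariantFinsetMap hY₀ hY₀_fin hΦ
  have hPE : ∀ᵐ x ∂μ, P x = {Classical.epsilon (· ∈ P x)} := by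
    filter_upwards [hP.ae_card_eq_one hQ hπ hX hX_fin] with x hx
    obtain ⟨u, hu⟩ := Finset.card_eq_one.1 hx
    rw [hu, Finset.mem_singleton.1 (Classical.epsilon_spec ⟨u, Finset.mem_singleton_self u⟩)]
  refine ⟨fun x => Classical.epsilon (· ∈ P x), fun S => ?_, fun x => Finset.singleton_nonempty _,
    fun g => ?_, fun n hn => ?_⟩
  · exact hP.1.measurableSet_preimage {F | {Classical.epsilon (· ∈ F)} ∈ S}
  · filter_upwards [hPE, ae_smul_of_ae hPE g, hP.1.map_smul g] with x h₁ h₂ h₃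
    exact h₂.symm.trans (h₃.trans (congrArg _ h₁))
  · filter_upwards [hPE, ae_smul_of_ae hPE n, hP.1.map_smul_of_mem n hn] with x h₁ h₂ h₃
    exact h₂.symm.trans (h₃.trans h₁)

theorem exists_fundamentalDomain_of_isEquivariantFinsetMap_singleton [Countable G] [Countable H]
    [SMulCommClass G H Ω] [MeasurableConstSMul G Ω] [MeasurableConstSMul H Ω]
    [SMulInvariantMeasure G Ω μ] [SMulInvariantMeasure H Ω μ] (hπ : Function.Surjective π)
    {Y₀ : Set Ω} (hY₀_meas : MeasurableSet Y₀) (hY₀ : ∀ᵐ x ∂μ, ∃! g : G, g • x ∈ Y₀) {E : Ω → Q}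
    (hE : IsEquivariantFinsetMap μ π N fun x => {E x}) :
    ∃ Y : Set Ω, MeasurableSet Y ∧ (∀ᵐ x ∂μ, ∃! g : G, g • x ∈ Y) ∧
      ∀ n ∈ N, ∀ y ∈ Y, ∃ a ∈ π.ker, ∃ y' ∈ Y, n • y = a • y' := by
  have hE_meas : ∀ T, MeasurableSet (E ⁻¹' T) := fun T => by
    have := hE.measurableSet_preimage ((fun q => ({q} : Finset Q)) '' T)
    rwa [show (fun x => ({E x} : Finset Q)) = (fun q => {q}) ∘ E from rfl, Set.preimage_comp,
      Finset.singleton_injective.preimage_image] at this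
  have hEG : ∀ᵐ x ∂μ, ∀ g : G, E (g • x) = π g * E x := ae_all_iff.2 fun g =>
    (hE.map_smul g).mono fun x hx => by
      rwa [Finset.smul_finset_singleton, Finset.singleton_inj] at hx
  have hEN : ∀ᵐ x ∂μ, ∀ n : N, E ((n : H) • x) = E x := ae_all_iff.2 fun n =>
    (hE.map_smul_of_mem n n.2).mono fun x hx => Finset.singleton_inj.1 hx
  obtain ⟨C, hC_meas, hC_ae, hC, hC_G, hC_H⟩ :=
    exists_smul_invariant_measurableSet_of_ae (G := G) (H := H) (hY₀.and (hEG.and hEN))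
  set ε := Function.surjInv hπ
  -- Each `G`-orbit meets `Y₀` in one point `y`; the new domain picks `ε (E y)⁻¹ • y` instead.
  set Y := C ∩ {x | ∃ k : G, k • x ∈ Y₀ ∧ ε (E (k • x)) = k}
  have hY_fund : ∀ x ∈ C, ∃! g : G, g • x ∈ Y := fun x hx => by
    simpa only [Y, Set.mem_inter_iff, hC_G _ x hx, true_and, Set.mem_ofPred_eq] using
      existsUnique_smul_mem_moved (fun y => ε (E y)) (hC x hx).1
  have hY_one : ∀ y ∈ Y, E y = 1 := by
    rintro y ⟨hyC, k, -, hk⟩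
    have := (hC y hyC).2.1 k
    rwa [← hk, Function.surjInv_eq hπ, hk, left_eq_mul] at this
  refine ⟨Y, hC_meas.inter ?_, hC_ae.mono hY_fund, fun n hn y hy => ?_⟩
  · have : {x | ∃ k : G, k • x ∈ Y₀ ∧ ε (E (k • x)) = k} =
        ⋃ k : G, (k • ·) ⁻¹' (Y₀ ∩ E ⁻¹' (ε ⁻¹' {k})) := by
      ext; simp
    rw [this]
    exact .iUnion fun k => measurable_const_smul k (hY₀_meas.inter (hE_meas _))
  obtain ⟨g, hg, -⟩ := hY_fund _ (hC_H n y hy.1)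
  have hπg : π g = 1 := by
    have hny : E (n • y) = E y := (hC y hy.1).2.2 ⟨n, hn⟩
    simpa [(hC _ (hC_H n y hy.1)).2.1 g, hny, hY_one y hy] using hY_one _ hg
  exact ⟨g⁻¹, inv_mem (MonoidHom.mem_ker.2 hπg), _, hg, (inv_smul_smul g _).symm⟩

theorem exists_extension_from_fundamentalDomain [Countable G] [MeasurableConstSMul G Ω]
    (π : G →* Q) {Y₀ : Set Ω} (hY₀_meas : MeasurableSet Y₀)
    (hY₀ : ∀ᵐ x ∂μ, ∃! g : G, g • x ∈ Y₀) {φ : Ω → Finset Q}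
    (hφ_meas : ∀ S, MeasurableSet (φ ⁻¹' S)) (hφ_ne : ∀ x, (φ x).Nonempty) :
    ∃ Φ : Ω → Finset Q, (∀ S, MeasurableSet (Φ ⁻¹' S)) ∧ (∀ x, (Φ x).Nonempty) ∧
      ∀ᵐ x ∂μ, ∀ g : G, g • x ∈ Y₀ → Φ x = (π g)⁻¹ • φ (g • x) := by
  classical
  obtain ⟨C, hC, hC_meas, hC_unique⟩ := hY₀.exists_measurable_mem
  set r : Ω → G := fun x => Classical.epsilon fun g : G => g • x ∈ Y₀
  have hr : ∀ x ∈ C, ∀ g : G, g • x ∈ Y₀ → r x = g := fun x hx g hg =>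
    (hC_unique x hx).unique (Classical.epsilon_spec (hC_unique x hx).exists) hg
  set Φ : Ω → Finset Q := C.piecewise (fun x => (π (r x))⁻¹ • φ (r x • x)) fun _ => {1}
  have hΦ : ∀ x ∈ C, ∀ g : G, g • x ∈ Y₀ → Φ x = (π g)⁻¹ • φ (g • x) := fun x hx g hg => by
    simp only [Φ, Set.piecewise_eq_of_mem _ _ _ hx, hr x hx g hg]
  refine ⟨Φ, fun S => ?_, fun x => ?_, (show ∀ᵐ x ∂μ, x ∈ C from hC).mono hΦ⟩
  · have hS : Φ ⁻¹' S ∩ C = ⋃ g : G, (g • ·) ⁻¹' (Y₀ ∩ φ ⁻¹' {F | (π g)⁻¹ • F ∈ S}) ∩ C := by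
      ext x
      simp only [Set.mem_inter_iff, Set.mem_preimage, Set.mem_iUnion, Set.mem_ofPred_eq]
      constructor
      · rintro ⟨hxS, hx⟩
        obtain ⟨g, hg, -⟩ := hC_unique x hx
        exact ⟨g, ⟨hg, hΦ x hx g hg ▸ hxS⟩, hx⟩
      · rintro ⟨g, ⟨hg, hxS⟩, hx⟩
        exact ⟨hΦ x hx g hg ▸ hxS, hx⟩
    have hSc : Φ ⁻¹' S \ C = {_x | ({1} : Finset Q) ∈ S} \ C := by
      ext x
      by_cases hx : x ∈ C <;> simp [Φ, hx]
    rw [← Set.inter_union_sdiff (Φ ⁻¹' S) C, hS, hSc]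
    exact .union (.iUnion fun g => (measurable_const_smul g (hY₀_meas.inter (hφ_meas _))).inter
      hC_meas) ((MeasurableSet.const _).diff hC_meas)
  · by_cases hx : x ∈ C <;> simp [Φ, hx, hφ_ne]

theorem exists_isEquivariantFinsetMap_of_essTrivialCocycle [Countable G] [Countable Q]
    [SMulCommClass G H Ω] [MeasurableConstSMul G Ω] [MeasurableConstSMul H Ω]
    [SMulInvariantMeasure G Ω μ] [SMulInvariantMeasure H Ω μ] (π : G →* Q) (N : Subgroup H)
    {Y₀ : Set Ω} (hY₀_meas : MeasurableSet Y₀) (hY₀ : ∀ᵐ x ∂μ, ∃! g : G, g • x ∈ Y₀)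
    (a : H → Ω → Ω) (c : H → Ω → G)
    (h_ind : ∀ n ∈ N, ∀ᵐ x ∂μ.restrict Y₀, a n x ∈ Y₀ ∧ a n x = n • c n x • x)
    (h_triv : EssTrivialCocycle (μ.restrict Y₀) (fun (n : N) x => a n x)
      (fun (n : N) x => π (c n x))) :
    ∃ Φ, IsEquivariantFinsetMap μ π N Φ := by
  obtain ⟨φ, hφ_meas, hφ_ne, hφ⟩ := h_triv
  obtain ⟨Φ, hΦ_meas, hΦ_ne, hΦ⟩ := exists_extension_from_fundamentalDomain π hY₀_meas hY₀
    (φ := φ) (fun S => by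
      rw [← Set.biUnion_preimage_singleton]
      exact .biUnion S.to_countable fun F _ => hφ_meas F) hφ_ne
  refine ⟨Φ, hΦ_meas, hΦ_ne, fun g => ?_, fun n hn => ?_⟩
  · filter_upwards [hY₀, hΦ, ae_smul_of_ae hΦ g] with x hx₀ hx hgx
    obtain ⟨g₀, hg₀, -⟩ := hx₀
    rw [hgx (g₀ * g⁻¹) (by rwa [smul_smul, inv_mul_cancel_right]), smul_smul,
      inv_mul_cancel_right, hx g₀ hg₀, map_mul, map_inv, mul_inv_rev, inv_inv, mul_smul]
  · have hY₀_rel : ∀ᵐ y ∂μ, y ∈ Y₀ → (a n y ∈ Y₀ ∧ a n y = n • c n y • y) ∧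
        φ (a n y) = π (c n y) • φ y := by
      refine ae_imp_of_ae_restrict ?_
      filter_upwards [h_ind n hn, hφ ⟨n, hn⟩] with y h₁ h₂
      refine ⟨h₁, Finset.coe_injective ?_⟩
      rw [Finset.coe_smul_finset, ← Set.image_smul]
      exact h₂
    filter_upwards [hY₀, hΦ, ae_smul_of_ae hΦ n, ae_all_iff.2 fun g : G =>
      ae_smul_of_ae hY₀_rel g] with x hx₀ hx hnx hrel
    obtain ⟨g₀, hg₀, -⟩ := hx₀
    obtain ⟨⟨ha_mem, ha_eq⟩, hφa⟩ := hrel g₀ hg₀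
    have hcg : (c n (g₀ • x) * g₀) • n • x = a n (g₀ • x) := by
      rw [mul_smul, smul_comm g₀ n x, smul_comm _ n, ← ha_eq]
    rw [hnx _ (hcg ▸ ha_mem), hcg, hφa, hx g₀ hg₀, map_mul, mul_inv_rev, mul_smul,
      inv_smul_smul]

end EquivariantFinsetMap

namespace MECoupling

variable {G H Ω : Type*} [Group G] [Group H] [MeasurableSpace Ω] {m : Measure Ω}
  {σ : G → Ω → Ω} {τ : H → Ω → Ω}

abbrev mulActionLeft (hME : MECoupling G H m σ τ) : MulAction G Ω where
  smul := σ
  one_smul x := congrFun hME.σ_one x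
  mul_smul g₁ g₂ x := congrFun (hME.σ_mul g₁ g₂) x

abbrev mulActionRight (hME : MECoupling G H m σ τ) : MulAction H Ω where
  smul := τ
  one_smul x := congrFun hME.τ_one x
  mul_smul h₁ h₂ x := congrFun (hME.τ_mul h₁ h₂) x

end MECoupling

theorem exists_fundamental_domain_of_essTrivial_quotient_cocycle_general
    {G H Ω : Type*} [Group G] [Countable G] [Group H] [Countable H]
    [MeasurableSpace Ω] (m : Measure Ω)
    (σ : G → Ω → Ω) (τ : H → Ω → Ω)
    (hME : MECoupling G H m σ τ)
    (M : Subgroup G) [M.Normal] (N : Subgroup H) [N.Normal]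
    (hICC : IsICC (G ⧸ M))
    (Y₀ : Set Ω) (hY₀_meas : MeasurableSet Y₀) (hY₀_fin : m Y₀ < ⊤)
    (hY₀_fund : ∀ᵐ ω ∂m, ∃! g : G, σ g ω ∈ Y₀)
    -- the induced action of `H` on `Y₀` and the associated ME-cocycle `c : H × Y₀ → G`:
    (a : H → Ω → Ω) (c : H → Ω → G)
    (h_ind : ∀ h, ∀ᵐ ω ∂m.restrict Y₀, a h ω ∈ Y₀ ∧ a h ω = τ h (σ (c h ω) ω))
    (h_triv : EssTrivialCocycle (m.restrict Y₀) (fun (n : N) ω => a (n : H) ω)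
      (fun (n : N) ω => (QuotientGroup.mk (c (n : H) ω) : G ⧸ M))) :
    ∃ Y : Set Ω, MeasurableSet Y ∧ (∀ᵐ ω ∂m, ∃! g : G, σ g ω ∈ Y) ∧
      (⋃ n : N, τ (n : H) '' Y) ⊆ ⋃ a : M, σ (a : G) '' Y := by
  classical
  let := hME.mulActionLeft
  let := hME.mulActionRight
  have : Countable (G ⧸ M) := Quotient.countable
  have : SMulCommClass G H Ω := ⟨fun g h x => congrFun (hME.comm g h) x⟩
  have : MeasurableConstSMul G Ω := ⟨fun g => (hME.σ_mp g).measurable⟩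
  have : MeasurableConstSMul H Ω := ⟨fun h => (hME.τ_mp h).measurable⟩
  have : SMulInvariantMeasure G Ω m :=
    ⟨fun g _ hs => (hME.σ_mp g).measure_preimage hs.nullMeasurableSet⟩
  have : SMulInvariantMeasure H Ω m :=
    ⟨fun h _ hs => (hME.τ_mp h).measure_preimage hs.nullMeasurableSet⟩
  obtain ⟨X, hX_meas, hX_fin, hX_fund⟩ := hME.exists_dom_H
  obtain ⟨Φ, hΦ⟩ := exists_isEquivariantFinsetMap_of_essTrivialCocycle (QuotientGroup.mk' M) N
    hY₀_meas hY₀_fund a c (fun n _ => h_ind n) h_triv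
  obtain ⟨E, hE⟩ := exists_isEquivariantFinsetMap_singleton hICC (QuotientGroup.mk'_surjective M)
    (.of_ae_existsUnique hY₀_meas.nullMeasurableSet hY₀_fund) hY₀_fin.ne
    (.of_ae_existsUnique hX_meas.nullMeasurableSet hX_fund) hX_fin.ne hΦ
  obtain ⟨Y, hY_meas, hY_fund, hY⟩ := exists_fundamentalDomain_of_isEquivariantFinsetMap_singleton
    (QuotientGroup.mk'_surjective M) hY₀_meas hY₀_fund hE
  refine ⟨Y, hY_meas, hY_fund, ?_⟩
  rintro _ ⟨_, ⟨n, rfl⟩, y, hy, rfl⟩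
  obtain ⟨g, hg, y', hy', hny⟩ := hY n n.2 y hy
  exact Set.mem_iUnion.2 ⟨⟨g, by simpa using hg⟩, y', hy', hny.symm⟩

/-- Lemma `lem:ME_ICC_quotient`. Let `M ⊴ G`, `N ⊴ H` with `Ḡ = G/M` ICC,
let `(Ω,m)` be an ME-coupling of `G` and `H` with fundamental domain `Y₀` for the `G`-action
and associated ME-cocycle `c : H × Y₀ → G`, and let `c̄` be its composition with `G → Ḡ`.
If `c̄|(N × Y₀)` is essentially trivial, then there is a fundamental domain `Y ⊆ Ω` for the
`G`-action with `NY ⊆ MY`. -/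
theorem exists_fundamental_domain_of_essTrivial_quotient_cocycle
    {G H Ω : Type*} [Group G] [Countable G] [Group H] [Countable H]
    [MeasurableSpace G] [MeasurableSingletonClass G]
    [MeasurableSpace Ω] (m : Measure Ω)
    (σ : G → Ω → Ω) (τ : H → Ω → Ω)
    (hME : MECoupling G H m σ τ)
    (M : Subgroup G) [M.Normal] (N : Subgroup H) [N.Normal]
    (hICC : IsICC (G ⧸ M))
    (Y₀ : Set Ω) (hY₀_meas : MeasurableSet Y₀) (hY₀_fin : m Y₀ < ⊤)
    (hY₀_fund : ∀ᵐ ω ∂m, ∃! g : G, σ g ω ∈ Y₀)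
    -- the induced action of `H` on `Y₀` and the associated ME-cocycle `c : H × Y₀ → G`:
    (a : H → Ω → Ω) (c : H → Ω → G)
    (ha_meas : ∀ h, Measurable (a h)) (hc_meas : ∀ h, Measurable (c h))
    (h_ind : ∀ h, ∀ᵐ ω ∂m.restrict Y₀, a h ω ∈ Y₀ ∧ a h ω = τ h (σ (c h ω) ω))
    (h_triv : EssTrivialCocycle (m.restrict Y₀) (fun (n : N) ω => a (n : H) ω)
      (fun (n : N) ω => (QuotientGroup.mk (c (n : H) ω) : G ⧸ M))) :
    ∃ Y : Set Ω, MeasurableSet Y ∧ (∀ᵐ ω ∂m, ∃! g : G, σ g ω ∈ Y) ∧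
      (⋃ n : N, τ (n : H) '' Y) ⊆ ⋃ a : M, σ (a : G) '' Y :=
  exists_fundamental_domain_of_essTrivial_quotient_cocycle_general m σ τ hME M N hICC Y₀ hY₀_meas
    hY₀_fin hY₀_fund a c h_ind h_triv
end
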